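/- arXiv:2603.28989 — 2 statements merged into one kernel-verified Lean document; each statement's English description precedes it below -/
import Mathlib

section
/- Conditional on the underlying data, the plug-in estimators built from 1-bit dithered quantized samples are unbiased: E[Σ̂ | X_1,…,X_n] = (1/n) Σ_{i=1}^n X_i X_iᵀ and E[Σ̂_{Xy} | (X_1,Y_1),…,(X_n,Y_n)] = (1/n) Σ_{i=1}^n X_i Y_i, where the expectations are taken with respect to the randomness of the quantization only. Consequently the estimating equation Ψ(β) := Σ̂β − Σ̂_{Xy} is unbiased at β = β*, i.e. E[Ψ(β*)] = 0. -/
open MeasureTheory ProbabilityTheory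

def IsOneBitQuant {Ω : Type*} [MeasurableSpace Ω] (μ : Measure Ω)
    (ℓ u z : ℝ) (Q : Ω → ℝ) : Prop :=
  Measurable Q ∧ (∀ ω, Q ω = ℓ ∨ Q ω = u) ∧
    μ {ω | Q ω = u} = ENNReal.ofReal ((z - ℓ) / (u - ℓ))

/-!
A 1-bit dithered quantizer of `z ∈ [ℓ, u]` equals `ℓ + (u - ℓ) 𝟙{Q = u}`, so its mean is
`ℓ + (u - ℓ) (z - ℓ) / (u - ℓ) = z`. Independence of distinct quantizers turns the mean of a product
into the product of the means, which handles the off-diagonal entries of `Σ̂` and every entry of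
`Σ̂_{Xy}`. On the diagonal the square of a quantizer with range `[-R, R]` is the constant `R²`, and
the correction `X̃²_{ij} - R²` replaces it by an unbiased estimate of `X_{ij}²`. Finally, given the
data, the mean of `Ψ(β*)` is `-(1/n) ∑ᵢ Xᵢ σ εᵢ`, whose mean over the noise vanishes.
-/

namespace IsOneBitQuant

variable {Ω : Type*} [MeasurableSpace Ω] {μ : Measure Ω} {ℓ u z : ℝ} {Q : Ω → ℝ}

lemma norm_le_max (h : IsOneBitQuant μ ℓ u z Q) (ω : Ω) : ‖Q ω‖ ≤ max |ℓ| |u| := by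
  rcases h.2.1 ω with hω | hω <;> simp [hω]

lemma integrable [IsFiniteMeasure μ] (h : IsOneBitQuant μ ℓ u z Q) : Integrable Q μ :=
  (integrable_const (max |ℓ| |u|)).mono' h.1.aestronglyMeasurable (ae_of_all _ h.norm_le_max)

lemma integrable_mul (h : IsOneBitQuant μ ℓ u z Q) {f : Ω → ℝ} (hf : Integrable f μ) :
    Integrable (fun ω => Q ω * f ω) μ :=
  hf.bdd_mul h.1.aestronglyMeasurable (ae_of_all _ h.norm_le_max)

lemma eq_add_mul_indicator (h : IsOneBitQuant μ ℓ u z Q) (ω : Ω) :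
    Q ω = ℓ + (u - ℓ) * {ω | Q ω = u}.indicator 1 ω := by
  by_cases hu : Q ω = u
  · simp [hu]
  · rw [Set.indicator_of_notMem (s := {ω | Q ω = u}) hu, (h.2.1 ω).resolve_right hu]
    simp

lemma integral_eq [IsProbabilityMeasure μ] (h : IsOneBitQuant μ ℓ u z Q) (hℓz : ℓ ≤ z)
    (hzu : z ≤ u) : ∫ ω, Q ω ∂μ = z := by
  have hmeas : MeasurableSet {ω | Q ω = u} := h.1 (measurableSet_singleton u)
  calc ∫ ω, Q ω ∂μ = ∫ ω, (ℓ + (u - ℓ) * {ω | Q ω = u}.indicator 1 ω) ∂μ :=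
        integral_congr_ae (ae_of_all _ h.eq_add_mul_indicator)
    _ = ℓ + (u - ℓ) * μ.real {ω | Q ω = u} := by
        rw [integral_add (integrable_const _)
          (((integrable_indicator_iff hmeas).2 integrableOn_const).const_mul _),
          integral_const_mul, integral_indicator_one hmeas]
        simp
    _ = z := by
        rw [measureReal_def, h.2.2, ENNReal.toReal_ofReal (div_nonneg (by linarith) (by linarith))]
        rcases (hℓz.trans hzu).eq_or_lt with hℓu | hℓu
        · subst hℓu
          simp [le_antisymm hzu hℓz]
        · field_simp [(sub_pos.2 hℓu).ne']
          ring

lemma integral_of_abs_le [IsProbabilityMeasure μ] {r : ℝ} (h : IsOneBitQuant μ (-r) r z Q)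
    (hz : |z| ≤ r) : ∫ ω, Q ω ∂μ = z :=
  h.integral_eq (neg_le_of_abs_le hz) (le_of_abs_le hz)

lemma integral_mul_of_indepFun [IsProbabilityMeasure μ] {r s z' : ℝ} {Q' : Ω → ℝ}
    (h : IsOneBitQuant μ (-r) r z Q) (h' : IsOneBitQuant μ (-s) s z' Q')
    (hind : IndepFun Q Q' μ) (hz : |z| ≤ r) (hz' : |z'| ≤ s) :
    ∫ ω, Q ω * Q' ω ∂μ = z * z' := by
  rw [hind.integral_fun_mul_eq_mul_integral h.1.aestronglyMeasurable h'.1.aestronglyMeasurable,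
    h.integral_of_abs_le hz, h'.integral_of_abs_le hz']

lemma mul_self_eq_sq {r : ℝ} (h : IsOneBitQuant μ (-r) r z Q) (ω : Ω) :
    Q ω * Q ω = r ^ 2 := by
  rcases h.2.1 ω with hω | hω <;> rw [hω] <;> ring

lemma integral_mul_self_add_sub [IsProbabilityMeasure μ] {r : ℝ} {S : Ω → ℝ}
    (h : IsOneBitQuant μ (-r) r z Q) (hS : IsOneBitQuant μ 0 (r ^ 2) (z ^ 2) S) (hz : |z| ≤ r) :
    ∫ ω, (Q ω * Q ω + (S ω - r ^ 2)) ∂μ = z * z := by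
  have hz2 : z ^ 2 ≤ r ^ 2 := sq_abs z ▸ pow_le_pow_left₀ (abs_nonneg z) hz 2
  simp_rw [h.mul_self_eq_sq, add_sub_cancel]
  rw [hS.integral_eq (sq_nonneg z) hz2, sq]

end IsOneBitQuant

section QuantizedEstimators

variable {Ω ι κ : Type*} [MeasurableSpace Ω] {μ : Measure Ω} {r : ℝ}

lemma integrable_mul_add_ite [IsFiniteMeasure μ] [DecidableEq κ] {x : κ → ℝ} {A S : κ → Ω → ℝ}
    (hA : ∀ j, IsOneBitQuant μ (-r) r (x j) (A j))
    (hS : ∀ j, IsOneBitQuant μ 0 (r ^ 2) (x j ^ 2) (S j)) (j k : κ) :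
    Integrable (fun ω => A j ω * A k ω + if j = k then S j ω - r ^ 2 else 0) μ := by
  refine ((hA j).integrable_mul (hA k).integrable).add ?_
  split_ifs
  · exact (hS j).integrable.sub (integrable_const _)
  · exact integrable_zero _ _ _

lemma integral_mul_add_ite [IsProbabilityMeasure μ] [DecidableEq κ] {x : κ → ℝ} {A S : κ → Ω → ℝ}
    (hA : ∀ j, IsOneBitQuant μ (-r) r (x j) (A j))
    (hS : ∀ j, IsOneBitQuant μ 0 (r ^ 2) (x j ^ 2) (S j)) (hx : ∀ j, |x j| ≤ r)
    (hind : Pairwise fun j k => IndepFun (A j) (A k) μ) (j k : κ) :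
    ∫ ω, (A j ω * A k ω + if j = k then S j ω - r ^ 2 else 0) ∂μ = x j * x k := by
  by_cases hjk : j = k
  · subst hjk
    simpa using (hA j).integral_mul_self_add_sub (hS j) (hx j)
  · simpa [hjk] using (hA j).integral_mul_of_indepFun (hA k) (hind hjk) (hx j) (hx k)

/-- `A` quantizes the samples and `S` their entrywise squares; with `c = 1 / n` this is `Σ̂`. -/
def quantizedGram [DecidableEq κ] (c r : ℝ) (A S : ι → κ → Ω → ℝ) (s : Finset ι) (ω : Ω)
    (j k : κ) : ℝ :=
  c * ∑ i ∈ s, (A i j ω * A i k ω + if j = k then S i j ω - r ^ 2 else 0)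

variable {c : ℝ} {x : ι → κ → ℝ} {A S : ι → κ → Ω → ℝ} {s : Finset ι}

lemma integrable_quantizedGram [IsFiniteMeasure μ] [DecidableEq κ]
    (hA : ∀ i j, IsOneBitQuant μ (-r) r (x i j) (A i j))
    (hS : ∀ i j, IsOneBitQuant μ 0 (r ^ 2) (x i j ^ 2) (S i j)) (j k : κ) :
    Integrable (fun ω => quantizedGram c r A S s ω j k) μ :=
  (integrable_finsetSum _ fun i _ => integrable_mul_add_ite (hA i) (hS i) j k).const_mul c

lemma integral_quantizedGram [IsProbabilityMeasure μ] [DecidableEq κ]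
    (hA : ∀ i j, IsOneBitQuant μ (-r) r (x i j) (A i j))
    (hS : ∀ i j, IsOneBitQuant μ 0 (r ^ 2) (x i j ^ 2) (S i j)) (hx : ∀ i j, |x i j| ≤ r)
    (hind : ∀ i, Pairwise fun j k => IndepFun (A i j) (A i k) μ) (j k : κ) :
    ∫ ω, quantizedGram c r A S s ω j k ∂μ = c * ∑ i ∈ s, x i j * x i k := by
  simp only [quantizedGram]
  rw [integral_const_mul, integral_finsetSum _ fun i _ => integrable_mul_add_ite (hA i) (hS i) j k]
  simp_rw [integral_mul_add_ite (hA _) (hS _) (hx _) (hind _)]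

/-- With `c = 1 / n`, `A` the quantized samples and `B` the quantized responses, this is
`Σ̂_{Xy}`. -/
def quantizedCross (c : ℝ) (A : ι → κ → Ω → ℝ) (B : ι → Ω → ℝ) (s : Finset ι) (ω : Ω)
    (j : κ) : ℝ :=
  c * ∑ i ∈ s, A i j ω * B i ω

lemma integrable_quantizedCross [IsFiniteMeasure μ] {ℓ u : ℝ} {B : ι → Ω → ℝ}
    (hA : ∀ i j, IsOneBitQuant μ ℓ u (x i j) (A i j)) (hB : ∀ i, Integrable (B i) μ) (j : κ) :
    Integrable (fun ω => quantizedCross c A B s ω j) μ :=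
  (integrable_finsetSum _ fun i _ => (hA i j).integrable_mul (hB i)).const_mul c

lemma integral_quantizedCross [IsProbabilityMeasure μ] {t : ℝ} {y : ι → ℝ} {B : ι → Ω → ℝ}
    (hA : ∀ i j, IsOneBitQuant μ (-r) r (x i j) (A i j))
    (hB : ∀ i, IsOneBitQuant μ (-t) t (y i) (B i)) (hx : ∀ i j, |x i j| ≤ r)
    (hy : ∀ i, |y i| ≤ t) (hind : ∀ i j, IndepFun (A i j) (B i) μ) (j : κ) :
    ∫ ω, quantizedCross c A B s ω j ∂μ = c * ∑ i ∈ s, x i j * y i := by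
  simp only [quantizedCross]
  rw [integral_const_mul, integral_finsetSum _ fun i _ => (hA i j).integrable_mul (hB i).integrable]
  simp_rw [(hA _ j).integral_mul_of_indepFun (hB _) (hind _ j) (hx _ j) (hy _)]

end QuantizedEstimators

lemma sum_gram_mul_sub_sum_mul_eq_neg {ι κ : Type*} [Fintype κ] (s : Finset ι) (c : ℝ)
    {x : ι → κ → ℝ} {β : κ → ℝ} {y e : ι → ℝ} (hy : ∀ i, y i = ∑ k, x i k * β k + e i) (j : κ) :
    ∑ k, (c * ∑ i ∈ s, x i j * x i k) * β k - c * ∑ i ∈ s, x i j * y i =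
      -(c * ∑ i ∈ s, x i j * e i) := by
  simp only [hy, mul_add, Finset.sum_add_distrib, Finset.mul_sum, Finset.sum_mul, mul_assoc]
  rw [Finset.sum_comm]
  ring

theorem stmt_0_general {Ω₁ Ω₂ : Type*} [MeasurableSpace Ω₁] [MeasurableSpace Ω₂]
    (μ₁ : Measure Ω₁) (μ₂ : Measure Ω₂)
    [IsProbabilityMeasure μ₁] [IsProbabilityMeasure μ₂]
    (n d : ℕ)
    (R L σ : ℝ)
    -- the (fixed, i.e. conditioned-upon) design
    (X : Fin n → Fin d → ℝ) (hX : ∀ i j, |X i j| ≤ R)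
    (βs : Fin d → ℝ)
    -- the noise variables
    (ε : Fin n → Ω₂ → ℝ)
    (hintε : ∀ i, Integrable (ε i) μ₂) (hmeanε : ∀ i, ∫ ω₂, ε i ω₂ ∂μ₂ = 0)
    -- the responses, following the linear model
    (Y : Fin n → Ω₂ → ℝ) (hY : ∀ i ω₂, Y i ω₂ = (∑ j, X i j * βs j) + σ * ε i ω₂)
    (hYbdd : ∀ i ω₂, |Y i ω₂| ≤ L)
    -- the 1-bit dithered quantizations
    (Xt Xsq : Fin n → Fin d → Ω₁ → ℝ) (Yt : Fin n → Ω₁ → Ω₂ → ℝ)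
    (hXt : ∀ i j, IsOneBitQuant μ₁ (-R) R (X i j) (Xt i j))
    (hXsq : ∀ i j, IsOneBitQuant μ₁ 0 (R ^ 2) (X i j ^ 2) (Xsq i j))
    (hYt : ∀ i ω₂, IsOneBitQuant μ₁ (-L) L (Y i ω₂) (fun ω₁ => Yt i ω₁ ω₂))
    -- all quantizations are mutually independent (given the data)
    (hindep : ∀ ω₂ : Ω₂, iIndepFun
      (fun k : (Fin n × Fin d) ⊕ (Fin n × Fin d) ⊕ Fin n =>
        Sum.elim (fun p ω₁ => Xt p.1 p.2 ω₁)
          (Sum.elim (fun p ω₁ => Xsq p.1 p.2 ω₁) (fun i ω₁ => Yt i ω₁ ω₂)) k) μ₁)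
    -- the plug-in estimators
    (Shat : Ω₁ → Fin d → Fin d → ℝ)
    (hShat : ∀ ω₁ j k, Shat ω₁ j k =
      (n : ℝ)⁻¹ * ∑ i, (Xt i j ω₁ * Xt i k ω₁ + if j = k then Xsq i j ω₁ - R ^ 2 else 0))
    (ShatXy : Ω₁ → Ω₂ → Fin d → ℝ)
    (hShatXy : ∀ ω₁ ω₂ j, ShatXy ω₁ ω₂ j = (n : ℝ)⁻¹ * ∑ i, Xt i j ω₁ * Yt i ω₁ ω₂) :
    (∀ j k, ∫ ω₁, Shat ω₁ j k ∂μ₁ = (n : ℝ)⁻¹ * ∑ i, X i j * X i k) ∧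
    (∀ ω₂ j, ∫ ω₁, ShatXy ω₁ ω₂ j ∂μ₁ = (n : ℝ)⁻¹ * ∑ i, X i j * Y i ω₂) ∧
    (∀ j, ∫ ω₂, (∫ ω₁, ((∑ k, Shat ω₁ j k * βs k) - ShatXy ω₁ ω₂ j) ∂μ₁) ∂μ₂ = 0) := by
  obtain ⟨ω₀⟩ := nonempty_of_isProbabilityMeasure μ₂
  have indep_Xt : ∀ i, Pairwise fun j k => IndepFun (Xt i j) (Xt i k) μ₁ := fun i j k hjk =>
    (hindep ω₀).indepFun (i := .inl (i, j)) (j := .inl (i, k)) (by simpa using hjk)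
  have indep_Xt_Yt : ∀ ω₂ i j, IndepFun (Xt i j) (fun ω₁ => Yt i ω₁ ω₂) μ₁ := fun ω₂ i j =>
    (hindep ω₂).indepFun (i := .inl (i, j)) (j := .inr (.inr i)) (by simp)
  obtain rfl : Shat = quantizedGram (n : ℝ)⁻¹ R Xt Xsq .univ := by
    funext ω₁ j k
    exact hShat ω₁ j k
  obtain rfl : ShatXy = fun ω₁ ω₂ =>
      quantizedCross (n : ℝ)⁻¹ Xt (fun i ω₁ => Yt i ω₁ ω₂) .univ ω₁ := by
    funext ω₁ ω₂ j
    exact hShatXy ω₁ ω₂ j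
  have mean_Shat := integral_quantizedGram (c := (n : ℝ)⁻¹) (s := .univ) hXt hXsq hX indep_Xt
  have mean_ShatXy := fun ω₂ => integral_quantizedCross (c := (n : ℝ)⁻¹) (s := .univ) hXt
    (hYt · ω₂) hX (hYbdd · ω₂) (indep_Xt_Yt ω₂)
  refine ⟨mean_Shat, mean_ShatXy, fun j => ?_⟩
  have mean_Ψ : ∀ ω₂, ∫ ω₁, ((∑ k, quantizedGram (n : ℝ)⁻¹ R Xt Xsq .univ ω₁ j k * βs k) -
      quantizedCross (n : ℝ)⁻¹ Xt (fun i ω₁ => Yt i ω₁ ω₂) .univ ω₁ j) ∂μ₁ =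
        -((n : ℝ)⁻¹ * ∑ i, X i j * (σ * ε i ω₂)) := by
    intro ω₂
    have integrable_term : ∀ k, Integrable
        (fun ω₁ => quantizedGram (n : ℝ)⁻¹ R Xt Xsq .univ ω₁ j k * βs k) μ₁ := fun k =>
      (integrable_quantizedGram hXt hXsq j k).mul_const _
    rw [integral_sub (integrable_finsetSum _ fun k _ => integrable_term k)
      (integrable_quantizedCross hXt (fun i => (hYt i ω₂).integrable) j),
      integral_finsetSum _ fun k _ => integrable_term k, mean_ShatXy]
    simp only [integral_mul_const, mean_Shat]
    exact sum_gram_mul_sub_sum_mul_eq_neg _ _ (hY · ω₂) j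
  rw [integral_congr_ae (ae_of_all _ mean_Ψ), integral_neg, integral_const_mul,
    integral_finsetSum _ fun i _ => ((hintε i).const_mul σ).const_mul _]
  simp [integral_const_mul, hmeanε]

/-- conditional on the underlying data, the plug-in estimators built from
1-bit dithered quantized samples are unbiased:
`E[Σ̂ | X] = (1/n) ∑ᵢ XᵢXᵢᵀ` and `E[Σ̂_{Xy} | X, Y] = (1/n) ∑ᵢ XᵢYᵢ`
(expectations over the quantization randomness `μ₁` only); consequently the estimating
equation `Ψ(β) = Σ̂β − Σ̂_{Xy}` is unbiased at `β = β*`, i.e. `E[Ψ(β*)] = 0`, where the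
outer expectation is also over the noise randomness `μ₂`. The design `X` is treated as
fixed, the responses `Yᵢ = Xᵢᵀβ* + σεᵢ` carry the randomness of the noise `ε` (on `Ω₂`),
and the quantization randomness lives on `Ω₁`. -/
theorem stmt_0 {Ω₁ Ω₂ : Type*} [MeasurableSpace Ω₁] [MeasurableSpace Ω₂]
    (μ₁ : Measure Ω₁) (μ₂ : Measure Ω₂)
    [IsProbabilityMeasure μ₁] [IsProbabilityMeasure μ₂]
    (n d : ℕ) (hn : 0 < n)
    (R L σ : ℝ) (hR : 0 < R) (hL : 0 < L)
    -- the (fixed, i.e. conditioned-upon) design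
    (X : Fin n → Fin d → ℝ) (hX : ∀ i j, |X i j| ≤ R)
    (βs : Fin d → ℝ)
    -- the noise variables
    (ε : Fin n → Ω₂ → ℝ) (hmeasε : ∀ i, Measurable (ε i))
    (hintε : ∀ i, Integrable (ε i) μ₂) (hmeanε : ∀ i, ∫ ω₂, ε i ω₂ ∂μ₂ = 0)
    -- the responses, following the linear model
    (Y : Fin n → Ω₂ → ℝ) (hY : ∀ i ω₂, Y i ω₂ = (∑ j, X i j * βs j) + σ * ε i ω₂)
    (hYbdd : ∀ i ω₂, |Y i ω₂| ≤ L)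
    -- the 1-bit dithered quantizations
    (Xt Xsq : Fin n → Fin d → Ω₁ → ℝ) (Yt : Fin n → Ω₁ → Ω₂ → ℝ)
    (hXt : ∀ i j, IsOneBitQuant μ₁ (-R) R (X i j) (Xt i j))
    (hXsq : ∀ i j, IsOneBitQuant μ₁ 0 (R ^ 2) (X i j ^ 2) (Xsq i j))
    (hYt : ∀ i ω₂, IsOneBitQuant μ₁ (-L) L (Y i ω₂) (fun ω₁ => Yt i ω₁ ω₂))
    (hYtmeas : ∀ i, Measurable fun p : Ω₁ × Ω₂ => Yt i p.1 p.2)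
    -- all quantizations are mutually independent (given the data)
    (hindep : ∀ ω₂ : Ω₂, iIndepFun
      (fun k : (Fin n × Fin d) ⊕ (Fin n × Fin d) ⊕ Fin n =>
        Sum.elim (fun p ω₁ => Xt p.1 p.2 ω₁)
          (Sum.elim (fun p ω₁ => Xsq p.1 p.2 ω₁) (fun i ω₁ => Yt i ω₁ ω₂)) k) μ₁)
    -- the plug-in estimators
    (Shat : Ω₁ → Fin d → Fin d → ℝ)
    (hShat : ∀ ω₁ j k, Shat ω₁ j k =
      (n : ℝ)⁻¹ * ∑ i, (Xt i j ω₁ * Xt i k ω₁ + if j = k then Xsq i j ω₁ - R ^ 2 else 0))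
    (ShatXy : Ω₁ → Ω₂ → Fin d → ℝ)
    (hShatXy : ∀ ω₁ ω₂ j, ShatXy ω₁ ω₂ j = (n : ℝ)⁻¹ * ∑ i, Xt i j ω₁ * Yt i ω₁ ω₂) :
    (∀ j k, ∫ ω₁, Shat ω₁ j k ∂μ₁ = (n : ℝ)⁻¹ * ∑ i, X i j * X i k) ∧
    (∀ ω₂ j, ∫ ω₁, ShatXy ω₁ ω₂ j ∂μ₁ = (n : ℝ)⁻¹ * ∑ i, X i j * Y i ω₂) ∧
    (∀ j, ∫ ω₂, (∫ ω₁, ((∑ k, Shat ω₁ j k * βs k) - ShatXy ω₁ ω₂ j) ∂μ₁) ∂μ₂ = 0) :=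
  stmt_0_general μ₁ μ₂ n d R L σ X hX βs ε hintε hmeanε Y hY hYbdd Xt Xsq Yt hXt hXsq hYt hindep
    Shat hShat ShatXy hShatXy
end

section
/- With Γ_a = E[(X̃_1X̃_1ᵀ + Δ_1)β*β*ᵀ(X̃_1X̃_1ᵀ + Δ_1)] and Γ_b = E[(X̃_1X̃_1ᵀ + Δ_1)β*X̃_1ᵀỸ_1] + E[X̃_1Ỹ_1β*ᵀ(X̃_1X̃_1ᵀ + Δ_1)], where Δ_1 = diag(X̃²_{11} − R², …, X̃²_{1d} − R²), the entrywise maximum bound ‖Γ_a − Γ_b‖_∞ ≤ 3R⁴‖β*‖₁² holds; in particular ‖Γ_a‖_∞ ≤ R⁴‖β*‖₁² and ‖Γ_b‖_∞ ≤ 2R⁴‖β*‖₁². -/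
open MeasureTheory ProbabilityTheory Set

/-!
Entrywise, `(X̃X̃ᵀ + Δ)β*` is bounded by `R²‖β*‖₁`: off the diagonal `X̃ⱼX̃ₖ = ±R²`, and on it
`X̃ⱼ² + X̃²ⱼ - R² = X̃²ⱼ ∈ {0, R²}`. This bounds `Γ_a` pointwise. The cross terms of `Γ_b` contain
`Ỹ`, which is only bounded by `L`, so they are de-quantized first. The dither of `Y` is independent
of everything else and the dithered 1-bit quantizer is unbiased, `E[Q_Y(y)] = y`, so `Ỹ` may be
replaced by `Y = Xᵀβ* + σε`. The noise `ε` is centred and independent of the features and of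
their dithers, so `Y` may in turn be replaced by `Xᵀβ*`, which is bounded by `R‖β*‖₁`.
-/

lemma abs_mul_le_of_abs_le {a b C D : ℝ} (ha : |a| ≤ C) (hb : |b| ≤ D) : |a * b| ≤ C * D := by
  rw [abs_mul]; exact mul_le_mul ha hb (abs_nonneg _) ((abs_nonneg _).trans ha)

lemma abs_sum_mul_le {ι : Type*} [Fintype ι] {a b : ι → ℝ} {C : ℝ} (h : ∀ i, |a i| ≤ C) :
    |∑ i, a i * b i| ≤ C * ∑ i, |b i| := by
  calc |∑ i, a i * b i| ≤ ∑ i, |a i * b i| := Finset.abs_sum_le_sum_abs _ _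
    _ ≤ ∑ i, C * |b i| := Finset.sum_le_sum fun i _ => by
        rw [abs_mul]; exact mul_le_mul_of_nonneg_right (h i) (abs_nonneg _)
    _ = C * ∑ i, |b i| := Finset.mul_sum _ _ _ |>.symm

lemma abs_mul_add_ite_le {ι : Type*} [DecidableEq ι] {R : ℝ} {x s : ι → ℝ}
    (hx : ∀ i, |x i| = R) (hs : ∀ i, s i ∈ Icc 0 (R ^ 2)) (i j : ι) :
    |x i * x j + if i = j then s i - R ^ 2 else 0| ≤ R ^ 2 := by
  rcases eq_or_ne i j with rfl | hij
  · have hxx : x i * x i = R ^ 2 := by rw [← abs_mul_abs_self, hx, sq]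
    rw [if_pos rfl, hxx, add_sub_cancel, abs_of_nonneg (hs i).1]
    exact (hs i).2
  · rw [if_neg hij, add_zero, abs_mul, hx, hx, sq]

lemma abs_integral_le_of_abs_le {Ω : Type*} [MeasurableSpace Ω] {μ : Measure Ω}
    [IsProbabilityMeasure μ] {f : Ω → ℝ} {C : ℝ} (h : ∀ ω, |f ω| ≤ C) : |∫ ω, f ω ∂μ| ≤ C := by
  simpa using norm_integral_le_of_norm_le_const (μ := μ) (f := f)
    (.of_forall fun ω => (h ω : ‖f ω‖ ≤ C))

lemma integral_ite_cond_volume_Ioo {L y : ℝ} (hL : 0 < L) (hy : |y| ≤ L) :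
    ∫ z, (if 0 ≤ y + z then L else -L) ∂(volume[|Ioo (-L) L]) = y := by
  obtain ⟨hyl, hyu⟩ := abs_le.mp hy
  have hvol : volume (Ioo (-L) L) = ENNReal.ofReal (2 * L) := by
    rw [Real.volume_Ioo]; ring_nf
  have : IsProbabilityMeasure (volume[|Ioo (-L) L]) :=
    cond_isProbabilityMeasure_of_finite (by simp [hvol, hL]) (hvol ▸ ENNReal.ofReal_ne_top)
  have hprob : (volume[|Ioo (-L) L]).real (Ici (-y)) = (L + y) / (2 * L) := by
    rw [measureReal_def, cond_apply measurableSet_Ioo,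
      measure_congr (ae_eq_refl _ |>.inter Ioi_ae_eq_Ici.symm), Ioo_inter_Ioi,
      max_eq_right (by linarith), hvol, Real.volume_Ioo, ENNReal.toReal_mul, ENNReal.toReal_inv,
      ENNReal.toReal_ofReal (by linarith), ENNReal.toReal_ofReal (by linarith)]
    ring
  have hsplit : (fun z => if 0 ≤ y + z then L else -L)
      = fun z => (Ici (-y)).indicator (fun _ => 2 * L) z - L := by
    ext z
    by_cases hz : 0 ≤ y + z
    · rw [if_pos hz, indicator_of_mem (show z ∈ Ici (-y) by rw [mem_Ici]; linarith)]; ring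
    · rw [if_neg hz, indicator_of_notMem (show z ∉ Ici (-y) by rw [mem_Ici]; linarith)]; ring
  rw [hsplit, integral_sub ((integrable_const _).indicator measurableSet_Ici) (integrable_const _),
    integral_indicator_const _ measurableSet_Ici, integral_const, hprob, probReal_univ]
  simp only [smul_eq_mul]
  field_simp
  ring

namespace ProbabilityTheory

lemma IndepFun.prodMk_indepFun_of_prodMk {Ω α β γ : Type*} [MeasurableSpace Ω]
    [MeasurableSpace α] [MeasurableSpace β] [MeasurableSpace γ] {μ : Measure Ω}
    [IsFiniteMeasure μ] {A : Ω → α} {B : Ω → β} {C : Ω → γ}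
    (hA : Measurable A) (hB : Measurable B) (hC : Measurable C)
    (hAB : IndepFun A B μ) (hABC : IndepFun (fun ω => (A ω, B ω)) C μ) :
    IndepFun (fun ω => (A ω, C ω)) B μ := by
  have hAC : IndepFun A C μ := hABC.comp measurable_fst measurable_id
  rw [indepFun_iff_map_prod_eq_prod_map_map (by fun_prop) hB.aemeasurable,
    (indepFun_iff_map_prod_eq_prod_map_map hA.aemeasurable hC.aemeasurable).1 hAC]
  have hlaw := (indepFun_iff_map_prod_eq_prod_map_map (by fun_prop) hC.aemeasurable).1 hABC
  rw [(indepFun_iff_map_prod_eq_prod_map_map hA.aemeasurable hB.aemeasurable).1 hAB] at hlaw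
  refine Measure.ext_prod₃' fun {s u t} hs hu ht => ?_
  have hpre : (fun ω => ((A ω, C ω), B ω)) ⁻¹' ((s ×ˢ u) ×ˢ t)
      = (fun ω => ((A ω, B ω), C ω)) ⁻¹' ((s ×ˢ t) ×ˢ u) := by
    ext ω; simp only [Set.mem_preimage, Set.mem_prod]; tauto
  have hlaw' := congrArg (fun ν => ν ((s ×ˢ t) ×ˢ u)) hlaw
  rw [Measure.map_apply (by fun_prop) ((hs.prod ht).prod hu), ← hpre,
    Measure.prod_prod, Measure.prod_prod] at hlaw'
  rw [Measure.map_apply (by fun_prop) ((hs.prod hu).prod ht), hlaw',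
    Measure.prod_prod, Measure.prod_prod]
  ring

lemma iIndepFun.indepFun_sumElim {Ω ι β : Type*} [MeasurableSpace Ω]
    [MeasurableSpace β] {μ : Measure Ω} [IsFiniteMeasure μ] [Fintype ι]
    {ξ η : ι → Ω → β} {ζ : Ω → β} (hξ : ∀ i, Measurable (ξ i)) (hη : ∀ i, Measurable (η i))
    (hζ : Measurable ζ)
    (h : iIndepFun (fun k : ι ⊕ ι ⊕ Unit => Sum.elim ξ (Sum.elim η fun _ => ζ) k) μ) :
    IndepFun (fun ω => (fun i => ξ i ω, fun i => η i ω)) ζ μ := by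
  classical
  set last : ι ⊕ ι ⊕ Unit := .inr (.inr ())
  have hmeas : ∀ k : ι ⊕ ι ⊕ Unit, Measurable (Sum.elim ξ (Sum.elim η fun _ => ζ) k) := by
    rintro (i | i | _) <;> simp [hξ, hη, hζ]
  have hsplit := h.indepFun_finset {last}ᶜ {last} disjoint_compl_left hmeas
  refine hsplit.comp (φ := fun v : ({last}ᶜ : Finset _) → β =>
    (fun i => v ⟨.inl i, by simp [last]⟩, fun i => v ⟨.inr (.inl i), by simp [last]⟩))
    (ψ := fun v : ({last} : Finset _) → β => v ⟨last, by simp⟩) ?_ ?_ <;> fun_prop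

lemma IndepFun.of_measurable_comap {Ω α β γ : Type*} [MeasurableSpace Ω]
    [mα : MeasurableSpace α] [MeasurableSpace β] [MeasurableSpace γ] {μ : Measure Ω}
    {U : Ω → α} {Z : Ω → β} {H : Ω → γ} (h : IndepFun U Z μ)
    (hH : Measurable[mα.comap U] H) : IndepFun H Z μ := by
  rw [IndepFun_iff_Indep] at h ⊢
  exact indep_of_indep_of_le_left h hH.comap_le

lemma IndepFun.integral_comp_eq_integral_integral {Ω α β : Type*} [MeasurableSpace Ω]
    [MeasurableSpace α] [MeasurableSpace β] {μ : Measure Ω} [IsFiniteMeasure μ]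
    {W : Ω → α} {Z : Ω → β} (hW : Measurable W) (hZ : Measurable Z) (h : IndepFun W Z μ)
    {F : α × β → ℝ} (hF : Measurable F) (hFi : Integrable (fun ω => F (W ω, Z ω)) μ) :
    ∫ ω, F (W ω, Z ω) ∂μ = ∫ w, ∫ z, F (w, z) ∂(μ.map Z) ∂(μ.map W) := by
  have hWZ : AEMeasurable (fun ω => (W ω, Z ω)) μ := by fun_prop
  have hlaw := (indepFun_iff_map_prod_eq_prod_map_map hW.aemeasurable hZ.aemeasurable).1 h
  have hFi' := (integrable_map_measure hF.aestronglyMeasurable hWZ).2 hFi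
  rw [hlaw] at hFi'
  rw [← integral_prod F hFi', ← hlaw, integral_map hWZ hF.aestronglyMeasurable]

lemma IndepFun.integral_mul_add_mul_eq {Ω : Type*} [MeasurableSpace Ω]
    {μ : Measure Ω} {H S ε : Ω → ℝ} {σ : ℝ} (hH : AEStronglyMeasurable H μ)
    (hε : AEStronglyMeasurable ε μ) (h : IndepFun H ε μ) (hmean : ∫ ω, ε ω ∂μ = 0)
    (hHS : Integrable (fun ω => H ω * S ω) μ)
    (hHY : Integrable (fun ω => H ω * (S ω + σ * ε ω)) μ) :
    ∫ ω, H ω * (S ω + σ * ε ω) ∂μ = ∫ ω, H ω * S ω ∂μ := by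
  have hnoise : Integrable (fun ω => H ω * (σ * ε ω)) μ :=
    (hHY.sub hHS).congr (.of_forall fun ω => by simp only [Pi.sub_apply]; ring)
  simp_rw [mul_add]
  rw [integral_add hHS hnoise, add_eq_left]
  simp_rw [mul_left_comm (H _) σ]
  rw [integral_const_mul, h.integral_fun_mul_eq_mul_integral hH hε, hmean, mul_zero, mul_zero]

lemma IndepFun.integral_mul_ite_of_isUniform {Ω : Type*} [MeasurableSpace Ω] {μ : Measure Ω}
    [IsFiniteMeasure μ] {G Y ζ : Ω → ℝ} (hG : Measurable G) (hY : Measurable Y)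
    (hζ : Measurable ζ) {C L : ℝ} (hL : 0 < L) (hGbdd : ∀ ω, |G ω| ≤ C)
    (hYbdd : ∀ ω, |Y ω| ≤ L) (hunif : pdf.IsUniform ζ (Ioo (-L) L) μ)
    (h : IndepFun (fun ω => (G ω, Y ω)) ζ μ) :
    ∫ ω, G ω * (if 0 ≤ Y ω + ζ ω then L else -L) ∂μ = ∫ ω, G ω * Y ω ∂μ := by
  have hGY : Measurable fun ω => (G ω, Y ω) := hG.prodMk hY
  have hF : Measurable fun p : (ℝ × ℝ) × ℝ => p.1.1 * (if 0 ≤ p.1.2 + p.2 then L else -L) :=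
    measurable_fst.fst.mul <| Measurable.ite (measurableSet_le measurable_const (by fun_prop))
      measurable_const measurable_const
  have hFi : Integrable (fun ω => G ω * (if 0 ≤ Y ω + ζ ω then L else -L)) μ :=
    .of_bound (hF.comp (hGY.prodMk hζ)).aestronglyMeasurable (C * L) (.of_forall fun ω =>
      abs_mul_le_of_abs_le (hGbdd ω) (by split_ifs <;> simp [abs_of_pos hL]))
  have hYbdd' : ∀ᵐ w ∂(μ.map fun ω => (G ω, Y ω)), |w.2| ≤ L :=
    (ae_map_iff hGY.aemeasurable (measurableSet_le measurable_snd.abs measurable_const)).2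
      (Filter.Eventually.of_forall hYbdd)
  rw [h.integral_comp_eq_integral_integral hGY hζ hF hFi, hunif,
    ← integral_map (f := fun w : ℝ × ℝ => w.1 * w.2) hGY.aemeasurable (by fun_prop)]
  refine integral_congr_ae (hYbdd'.mono fun w hw => ?_)
  simp only [integral_const_mul, integral_ite_cond_volume_Ioo hL hw]

end ProbabilityTheory

lemma integral_mul_ditheredResponse_eq {Ω α : Type*} [MeasurableSpace Ω]
    [mα : MeasurableSpace α] {μ : Measure Ω} [IsFiniteMeasure μ] {U : Ω → α}
    {H S ε ζ : Ω → ℝ} {σ C D L : ℝ} (hU : Measurable U) (hε : Measurable ε) (hζ : Measurable ζ)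
    (hH : Measurable[mα.comap U] H) (hS : Measurable[mα.comap U] S) (hL : 0 < L)
    (hHbdd : ∀ ω, |H ω| ≤ C) (hSbdd : ∀ ω, |S ω| ≤ D) (hYbdd : ∀ ω, |S ω + σ * ε ω| ≤ L)
    (hunif : pdf.IsUniform ζ (Ioo (-L) L) μ) (hmean : ∫ ω, ε ω ∂μ = 0)
    (hUε : IndepFun U ε μ) (hUεζ : IndepFun (fun ω => (U ω, ε ω)) ζ μ) :
    ∫ ω, H ω * (if 0 ≤ S ω + σ * ε ω + ζ ω then L else -L) ∂μ = ∫ ω, H ω * S ω ∂μ := by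
  have hUU : mα.comap U ≤ MeasurableSpace.comap (fun ω => (U ω, ε ω)) inferInstance :=
    (comap_measurable (fun ω => (U ω, ε ω))).fst.comap_le
  have hHS : Measurable[MeasurableSpace.comap (fun ω => (U ω, ε ω)) inferInstance]
      fun ω => (H ω, S ω + σ * ε ω) :=
    (hH.mono hUU le_rfl).prodMk ((hS.mono hUU le_rfl).add
      (measurable_const.mul (comap_measurable _).snd))
  have hH' : Measurable H := hH.mono hU.comap_le le_rfl
  have hS' : Measurable S := hS.mono hU.comap_le le_rfl
  rw [(hUεζ.of_measurable_comap hHS).integral_mul_ite_of_isUniform hH' (by fun_prop) hζ hL hHbdd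
      hYbdd hunif,
    (hUε.of_measurable_comap hH).integral_mul_add_mul_eq hH'.aestronglyMeasurable
      hε.aestronglyMeasurable hmean
      (.of_bound (by fun_prop) _ (.of_forall fun ω => abs_mul_le_of_abs_le (hHbdd ω) (hSbdd ω)))
      (.of_bound (by fun_prop) _ (.of_forall fun ω => abs_mul_le_of_abs_le (hHbdd ω) (hYbdd ω)))]

lemma measurable_quantizedDesign_mul {Ω : Type*} {m : MeasurableSpace Ω} {d : ℕ} {R : ℝ}
    {βs : Fin d → ℝ} {X : Ω → Fin d → ℝ} {ξ η : Fin d → Ω → ℝ} {Xt Xsq : Fin d → Ω → ℝ}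
    {Aβ : Ω → Fin d → ℝ} (hX : Measurable X) (hξ : Measurable fun ω j => ξ j ω)
    (hη : Measurable fun ω j => η j ω)
    (hXt : ∀ j ω, Xt j ω = if 0 ≤ X ω j + ξ j ω then R else -R)
    (hXsq : ∀ j ω, Xsq j ω = if R ^ 2 / 2 ≤ (X ω j) ^ 2 + η j ω then R ^ 2 else 0)
    (hAβ : ∀ ω j, Aβ ω j =
      ∑ k, (Xt j ω * Xt k ω + if j = k then Xsq j ω - R ^ 2 else 0) * βs k)
    (j k : Fin d) : Measurable fun ω => Aβ ω j * Xt k ω := by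
  have hXt' : ∀ i, Measurable (Xt i) := fun i => by
    rw [funext (hXt i)]
    exact Measurable.ite (measurableSet_le measurable_const (hX.eval.add hξ.eval))
      measurable_const measurable_const
  have hXsq' : ∀ i, Measurable (Xsq i) := fun i => by
    rw [funext (hXsq i)]
    exact Measurable.ite (measurableSet_le measurable_const ((hX.eval.pow_const 2).add hη.eval))
      measurable_const measurable_const
  simp_rw [hAβ]
  refine Measurable.mul (Finset.measurable_sum _ fun i _ => ?_) (hXt' k)
  split_ifs <;> fun_prop

theorem stmt_6_general {Ω : Type*} [MeasurableSpace Ω] (μ : Measure Ω) [IsProbabilityMeasure μ]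
    (d : ℕ) (R L σ : ℝ) (hR : 0 < R) (hL : 0 < L)
    (X : Ω → Fin d → ℝ) (ε : Ω → ℝ) (βs : Fin d → ℝ)
    (hmX : Measurable X) (hmε : Measurable ε)
    (hXbdd : ∀ ω j, |X ω j| ≤ R)
    (Y : Ω → ℝ) (hY : ∀ ω, Y ω = (∑ j, X ω j * βs j) + σ * ε ω)
    (hYbdd : ∀ ω, |Y ω| ≤ L)
    (hmeanε : ∫ ω, ε ω ∂μ = 0)
    (hXε : IndepFun X ε μ)
    -- dither variables: mutually independent, independent of the data, uniform
    (ξ η : Fin d → Ω → ℝ) (ζ : Ω → ℝ)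
    (hmξ : ∀ j, Measurable (ξ j)) (hmη : ∀ j, Measurable (η j)) (hmζ : Measurable ζ)
    (hunifζ : pdf.IsUniform ζ (Set.Ioo (-L) L) μ volume)
    (hdithind : iIndepFun
      (fun k : Fin d ⊕ Fin d ⊕ Unit => Sum.elim ξ (Sum.elim η (fun _ => ζ)) k) μ)
    (hdithdata : IndepFun (fun ω => (X ω, ε ω))
      (fun ω => ((fun j => ξ j ω), (fun j => η j ω), ζ ω)) μ)
    -- the 1-bit dithered quantized data
    (Xt Xsq : Fin d → Ω → ℝ) (Yt : Ω → ℝ)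
    (hXt : ∀ j ω, Xt j ω = if 0 ≤ X ω j + ξ j ω then R else -R)
    (hXsq : ∀ j ω, Xsq j ω = if R ^ 2 / 2 ≤ (X ω j) ^ 2 + η j ω then R ^ 2 else 0)
    (hYt : ∀ ω, Yt ω = if 0 ≤ Y ω + ζ ω then L else -L)
    -- (X̃₁X̃₁ᵀ + Δ₁)β*
    (Aβ : Ω → Fin d → ℝ)
    (hAβ : ∀ ω j, Aβ ω j =
      ∑ k, (Xt j ω * Xt k ω + if j = k then Xsq j ω - R ^ 2 else 0) * βs k)
    (Γa Γb : Fin d → Fin d → ℝ)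
    (hΓa : ∀ j k, Γa j k = ∫ ω, Aβ ω j * Aβ ω k ∂μ)
    (hΓb : ∀ j k, Γb j k =
      (∫ ω, Aβ ω j * (Xt k ω * Yt ω) ∂μ) + ∫ ω, (Xt j ω * Yt ω) * Aβ ω k ∂μ) :
    ∀ j k, |Γa j k| ≤ R ^ 4 * (∑ m, |βs m|) ^ 2 ∧
      |Γb j k| ≤ 2 * R ^ 4 * (∑ m, |βs m|) ^ 2 ∧
      |Γa j k - Γb j k| ≤ 3 * R ^ 4 * (∑ m, |βs m|) ^ 2 := by
  set B := ∑ m, |βs m|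
  have hXt_abs : ∀ j ω, |Xt j ω| = R := fun j ω => by
    rw [hXt]; split_ifs <;> simp [abs_of_pos hR]
  have hXsq_mem : ∀ j ω, Xsq j ω ∈ Set.Icc 0 (R ^ 2) := fun j ω => by
    rw [hXsq]; split_ifs <;> simp [sq_nonneg]
  have hAβ_le : ∀ ω j, |Aβ ω j| ≤ R ^ 2 * B := fun ω j => by
    rw [hAβ]; exact abs_sum_mul_le (abs_mul_add_ite_le (hXt_abs · ω) (hXsq_mem · ω) j)
  have hXβ_le : ∀ ω, |∑ m, X ω m * βs m| ≤ R * B := fun ω => abs_sum_mul_le (hXbdd ω)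
  set U : Ω → (Fin d → ℝ) × (Fin d → ℝ) × (Fin d → ℝ) :=
    fun ω => (X ω, fun j => ξ j ω, fun j => η j ω)
  have hUε : IndepFun U ε μ :=
    (hXε.prodMk_indepFun_of_prodMk hmX hmε (by fun_prop) hdithdata).comp
      (φ := fun p => (p.1, p.2.1, p.2.2.1)) (by fun_prop) measurable_id
  have hUεζ : IndepFun (fun ω => (U ω, ε ω)) ζ μ :=
    ((hdithind.indepFun_sumElim hmξ hmη hmζ).prodMk_indepFun_of_prodMk (by fun_prop) hmζ
      (hmX.prodMk hmε) (hdithdata.symm.comp (φ := fun p => ((p.1, p.2.1), p.2.2))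
        (by fun_prop) measurable_id)).comp
      (φ := fun p => ((p.2.1, p.1), p.2.2)) (by fun_prop) measurable_id
  have hcross : ∀ j k, |∫ ω, Aβ ω j * (Xt k ω * Yt ω) ∂μ| ≤ R ^ 4 * B ^ 2 := fun j k => by
    have hU : Measurable[MeasurableSpace.comap U inferInstance] U := comap_measurable U
    have hH := measurable_quantizedDesign_mul hU.fst hU.snd.fst hU.snd.snd hXt hXsq hAβ j k
    have hS : Measurable[MeasurableSpace.comap U inferInstance] fun ω => ∑ m, X ω m * βs m :=
      (by fun_prop : Measurable fun u : (Fin d → ℝ) × _ => ∑ m, u.1 m * βs m).comp hU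
    calc |∫ ω, Aβ ω j * (Xt k ω * Yt ω) ∂μ|
        = |∫ ω, Aβ ω j * Xt k ω * ∑ m, X ω m * βs m ∂μ| := by
          rw [← integral_mul_ditheredResponse_eq (by fun_prop) hmε hmζ hH hS hL
            (fun ω => abs_mul_le_of_abs_le (hAβ_le ω j) (hXt_abs k ω).le) hXβ_le
            (fun ω => hY ω ▸ hYbdd ω) hunifζ hmeanε hUε hUεζ]
          simp_rw [hYt, hY, mul_assoc]
      _ ≤ R ^ 2 * B * R * (R * B) := abs_integral_le_of_abs_le fun ω =>
          abs_mul_le_of_abs_le (abs_mul_le_of_abs_le (hAβ_le ω j) (hXt_abs k ω).le) (hXβ_le ω)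
      _ = R ^ 4 * B ^ 2 := by ring
  intro j k
  have hΓa_le : |Γa j k| ≤ R ^ 4 * B ^ 2 := by
    rw [hΓa]
    exact (abs_integral_le_of_abs_le fun ω =>
      abs_mul_le_of_abs_le (hAβ_le ω j) (hAβ_le ω k)).trans_eq (by ring)
  have hΓb_le : |Γb j k| ≤ 2 * R ^ 4 * B ^ 2 := by
    rw [hΓb]
    simp_rw [mul_comm (Xt j _ * Yt _) (Aβ _ k)]
    linarith [abs_add_le (∫ ω, Aβ ω j * (Xt k ω * Yt ω) ∂μ) (∫ ω, Aβ ω k * (Xt j ω * Yt ω) ∂μ),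
      hcross j k, hcross k j]
  exact ⟨hΓa_le, hΓb_le, (abs_sub _ _).trans (by linarith)⟩

/-- with `Γ_a = E[(X̃₁X̃₁ᵀ + Δ₁)β*β*ᵀ(X̃₁X̃₁ᵀ + Δ₁)]` and
`Γ_b = E[(X̃₁X̃₁ᵀ + Δ₁)β*X̃₁ᵀỸ₁] + E[X̃₁Ỹ₁β*ᵀ(X̃₁X̃₁ᵀ + Δ₁)]`, one has
`‖Γ_a − Γ_b‖_∞ ≤ 3R⁴‖β*‖₁²`, and in particular `‖Γ_a‖_∞ ≤ R⁴‖β*‖₁²`,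
`‖Γ_b‖_∞ ≤ 2R⁴‖β*‖₁²`.  Quantization is modelled through independent uniform dithers. -/
theorem stmt_6 {Ω : Type*} [MeasurableSpace Ω] (μ : Measure Ω) [IsProbabilityMeasure μ]
    (d : ℕ) (R L σ : ℝ) (hR : 0 < R) (hL : 0 < L)
    (X : Ω → Fin d → ℝ) (ε : Ω → ℝ) (βs : Fin d → ℝ)
    (hmX : Measurable X) (hmε : Measurable ε)
    (hXbdd : ∀ ω j, |X ω j| ≤ R)
    (Y : Ω → ℝ) (hY : ∀ ω, Y ω = (∑ j, X ω j * βs j) + σ * ε ω)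
    (hYbdd : ∀ ω, |Y ω| ≤ L)
    (hmeanε : ∫ ω, ε ω ∂μ = 0) (hεvar : ∫ ω, ε ω ^ 2 ∂μ = 1)
    (hXε : IndepFun X ε μ)
    -- dither variables: mutually independent, independent of the data, uniform
    (ξ η : Fin d → Ω → ℝ) (ζ : Ω → ℝ)
    (hmξ : ∀ j, Measurable (ξ j)) (hmη : ∀ j, Measurable (η j)) (hmζ : Measurable ζ)
    (hunifξ : ∀ j, pdf.IsUniform (ξ j) (Set.Ioo (-R) R) μ volume)
    (hunifη : ∀ j, pdf.IsUniform (η j) (Set.Ioo (-(R ^ 2 / 2)) (R ^ 2 / 2)) μ volume)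
    (hunifζ : pdf.IsUniform ζ (Set.Ioo (-L) L) μ volume)
    (hdithind : iIndepFun
      (fun k : Fin d ⊕ Fin d ⊕ Unit => Sum.elim ξ (Sum.elim η (fun _ => ζ)) k) μ)
    (hdithdata : IndepFun (fun ω => (X ω, ε ω))
      (fun ω => ((fun j => ξ j ω), (fun j => η j ω), ζ ω)) μ)
    -- the 1-bit dithered quantized data
    (Xt Xsq : Fin d → Ω → ℝ) (Yt : Ω → ℝ)
    (hXt : ∀ j ω, Xt j ω = if 0 ≤ X ω j + ξ j ω then R else -R)
    (hXsq : ∀ j ω, Xsq j ω = if R ^ 2 / 2 ≤ (X ω j) ^ 2 + η j ω then R ^ 2 else 0)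
    (hYt : ∀ ω, Yt ω = if 0 ≤ Y ω + ζ ω then L else -L)
    -- (X̃₁X̃₁ᵀ + Δ₁)β*
    (Aβ : Ω → Fin d → ℝ)
    (hAβ : ∀ ω j, Aβ ω j =
      ∑ k, (Xt j ω * Xt k ω + if j = k then Xsq j ω - R ^ 2 else 0) * βs k)
    (Γa Γb : Fin d → Fin d → ℝ)
    (hΓa : ∀ j k, Γa j k = ∫ ω, Aβ ω j * Aβ ω k ∂μ)
    (hΓb : ∀ j k, Γb j k =
      (∫ ω, Aβ ω j * (Xt k ω * Yt ω) ∂μ) + ∫ ω, (Xt j ω * Yt ω) * Aβ ω k ∂μ) :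
    ∀ j k, |Γa j k| ≤ R ^ 4 * (∑ m, |βs m|) ^ 2 ∧
      |Γb j k| ≤ 2 * R ^ 4 * (∑ m, |βs m|) ^ 2 ∧
      |Γa j k - Γb j k| ≤ 3 * R ^ 4 * (∑ m, |βs m|) ^ 2 :=
  stmt_6_general μ d R L σ hR hL X ε βs hmX hmε hXbdd Y hY hYbdd hmeanε hXε ξ η ζ hmξ hmη hmζ hunifζ
    hdithind hdithdata Xt Xsq Yt hXt hXsq hYt Aβ hAβ Γa Γb hΓa hΓb
end
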